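/- For every adjointable operator T on a Hilbert C*-module H, (1/2)‖T‖ ≤ w̃(T) ≤ ‖T‖, where w̃ is the spatial numerical radius. -/

import Mathlib

open scoped ComplexOrder RightActions

noncomputable section

/-- The Hilbert C*-module class as it stood in Mathlib of December 2024 (right action of `A`
through `Aᵐᵒᵖ`); Mathlib's `CStarModule` is now a left module with other axioms. -/
class CStarModuleOld (A E : Type*) [NonUnitalSemiring A] [StarRing A]
    [Module ℂ A] [AddCommGroup E] [Module ℂ E] [PartialOrder A] [SMul Aᵐᵒᵖ E] [Norm A] [Norm E]
    extends Inner A E where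
  inner_add_right {x} {y} {z} : inner x (y + z) = inner x y + inner x z
  inner_self_nonneg {x} : 0 ≤ inner x x
  inner_self {x} : inner x x = 0 ↔ x = 0
  inner_op_smul_right {a : A} {x y : E} : inner x (MulOpposite.op a • y) = inner x y * a
  inner_smul_right_complex {z : ℂ} {x} {y} : inner x (z • y) = z • inner x y
  star_inner x y : star (inner x y) = inner y x
  norm_eq_sqrt_norm_inner_self x : ‖x‖ = √‖inner x x‖

variable {A : Type*} [NonUnitalCStarAlgebra A] [PartialOrder A] [StarOrderedRing A]
variable {H : Type*} [NormedAddCommGroup H] [NormedSpace ℂ H] [SMul Aᵐᵒᵖ H] [CStarModuleOld A H]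

/-- A state on the C*-algebra `A`: a norm-one functional that is positive. -/
def IsState (ρ : A →L[ℂ] ℂ) : Prop :=
  ‖ρ‖ = 1 ∧ ∀ a : A, 0 ≤ ρ (star a * a)

/-- The spatial numerical radius `w̃(T)`. -/
def spatialNumRadius (A : Type*) {H : Type*} [NonUnitalCStarAlgebra A] [PartialOrder A]
    [StarOrderedRing A] [NormedAddCommGroup H] [NormedSpace ℂ H] [SMul Aᵐᵒᵖ H] [CStarModuleOld A H]
    (T : H →L[ℂ] H) : ℝ :=
  sSup {r : ℝ | ∃ (x : H) (ρ : A →L[ℂ] ℂ), IsState ρ ∧ ρ (inner A x x : A) = 1 ∧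
    r = ‖ρ (inner A x (T x) : A)‖}

/-- The numerical radius `w(T)` of a Hilbert C*-module operator. -/
def numRadius (A : Type*) {H : Type*} [NonUnitalCStarAlgebra A] [PartialOrder A]
    [StarOrderedRing A] [NormedAddCommGroup H] [NormedSpace ℂ H] [SMul Aᵐᵒᵖ H] [CStarModuleOld A H]
    (T : H →L[ℂ] H) : ℝ :=
  sSup {r : ℝ | ∃ x : H, ‖x‖ = 1 ∧ r = ‖(inner A (T x) x : A)‖}

namespace CStarModuleOld

lemma inner_add_left {x y z : H} : inner A (x + y) z = inner A x z + inner A y z := by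
  rw [← CStarModuleOld.star_inner (A := A) z (x + y), CStarModuleOld.inner_add_right, star_add,
    CStarModuleOld.star_inner, CStarModuleOld.star_inner]

lemma inner_smul_left_complex {z : ℂ} {x y : H} : inner A (z • x) y = star z • inner A x y := by
  rw [← CStarModuleOld.star_inner (A := A) y (z • x), CStarModuleOld.inner_smul_right_complex,
    star_smul, CStarModuleOld.star_inner]

lemma norm_sq_eq {x : H} : ‖x‖ ^ 2 = ‖inner A x x‖ := by
  rw [CStarModuleOld.norm_eq_sqrt_norm_inner_self (A := A) x, Real.sq_sqrt (norm_nonneg _)]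

end CStarModuleOld

section SNRAuxSection

open scoped CStarAlgebra

namespace SNRAux

set_option linter.unusedSectionVars false

/-! ### Generalities on states -/

section Unital

/-- A norm-one functional on a unital C⋆-algebra sending `1` to `1` is real on selfadjoints. -/
lemma real_on_selfAdjoint {B : Type*} [CStarAlgebra B] [Nontrivial B] (g : B →L[ℂ] ℂ)
    (hg : ‖g‖ = 1) (h1 : g 1 = 1) {c : B} (hc : IsSelfAdjoint c) : (g c).im = 0 := by
  set K : ℝ := ‖c‖^2 with hK
  have hKnn : 0 ≤ K := by positivity
  have key : ∀ t : ℝ, -2 * t * (g c).im ≤ t^2 * K := by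
    intro t
    have hnorm : ‖(1 : B) + ((t : ℂ) * Complex.I) • c‖^2 ≤ 1 + t^2 * K := by
      have hsq : ‖(1 : B) + ((t : ℂ) * Complex.I) • c‖^2
          = ‖star ((1 : B) + ((t : ℂ) * Complex.I) • c) * ((1 : B) + ((t : ℂ) * Complex.I) • c)‖ := by
        rw [CStarRing.norm_star_mul_self, sq]
      have hstar : star ((1 : B) + ((t : ℂ) * Complex.I) • c)
          = (1 : B) - ((t : ℂ) * Complex.I) • c := by
        simp [star_smul, hc.star_eq, sub_eq_add_neg, Complex.ext_iff]
      have hmul0 : ((1 : B) - ((t : ℂ) * Complex.I) • c) * ((1 : B) + ((t : ℂ) * Complex.I) • c)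
          = 1 - (((t : ℂ) * Complex.I) * ((t : ℂ) * Complex.I)) • (c * c) := by
        simp only [sub_mul, mul_add, one_mul, mul_one, smul_mul_assoc, mul_smul_comm, smul_add,
          smul_smul]
        module
      have hss : ((t:ℂ) * Complex.I) * ((t:ℂ) * Complex.I) = -((t^2 : ℝ) : ℂ) := by
        push_cast
        rw [mul_mul_mul_comm, Complex.I_mul_I]
        ring
      have hmul : ((1 : B) - ((t : ℂ) * Complex.I) • c) * ((1 : B) + ((t : ℂ) * Complex.I) • c)
          = 1 + ((t^2 : ℝ) : ℂ) • (c * c) := by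
        rw [hmul0, hss, neg_smul, sub_neg_eq_add]
      rw [hsq, hstar, hmul]
      calc ‖(1:B) + ((t^2 : ℝ) : ℂ) • (c * c)‖ ≤ ‖(1:B)‖ + ‖((t^2 : ℝ) : ℂ) • (c * c)‖ :=
            norm_add_le _ _
      _ ≤ 1 + t^2 * K := by
          rw [norm_one, norm_smul, Complex.norm_real, Real.norm_eq_abs, abs_of_nonneg (sq_nonneg t)]
          gcongr
          calc ‖c * c‖ ≤ ‖c‖ * ‖c‖ := norm_mul_le c c
          _ = K := by rw [hK]; ring
    have happ : ‖g ((1 : B) + ((t : ℂ) * Complex.I) • c)‖^2 ≤ 1 + t^2 * K := by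
      calc ‖g ((1 : B) + ((t : ℂ) * Complex.I) • c)‖^2
          ≤ (‖g‖ * ‖(1 : B) + ((t : ℂ) * Complex.I) • c‖)^2 := by
            apply pow_le_pow_left₀ (norm_nonneg _)
            exact g.le_opNorm _
      _ = ‖(1 : B) + ((t : ℂ) * Complex.I) • c‖^2 := by rw [hg, one_mul]
      _ ≤ 1 + t^2 * K := hnorm
    have hval : g ((1 : B) + ((t : ℂ) * Complex.I) • c) = 1 + (t : ℂ) * Complex.I * g c := by
      rw [map_add, map_smul, h1, smul_eq_mul]
    rw [hval] at happ
    have hexp : ‖1 + (t : ℂ) * Complex.I * g c‖^2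
        = (1 - t * (g c).im)^2 + (t * (g c).re)^2 := by
      rw [Complex.sq_norm, Complex.normSq_apply]
      simp [Complex.add_re, Complex.add_im, Complex.mul_re, Complex.mul_im]
      ring
    rw [hexp] at happ
    nlinarith [sq_nonneg (t * (g c).re), sq_nonneg (t * (g c).im)]
  set β := (g c).im
  rcases eq_or_ne β 0 with h | h
  · exact h
  · exfalso
    have h1' := key (-β / (K + 1))
    have hKpos : (0:ℝ) < K + 1 := by linarith
    rw [div_pow] at h1'
    have h2' : 2 * β^2 / (K+1) ≤ β^2 * K / (K+1)^2 := by
      calc 2 * β^2 / (K+1) = -2 * (-β / (K + 1)) * β := by field_simp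
      _ ≤ (-β)^2 / (K+1)^2 * K := h1'
      _ = β^2 * K / (K+1)^2 := by ring
    have hβ : 0 < β^2 := by positivity
    rw [div_le_div_iff₀ hKpos (by positivity)] at h2'
    nlinarith

/-- A norm-one functional on a unital C⋆-algebra sending `1` to `1` is positive. -/
lemma pos_of_norm_one_unital {B : Type*} [CStarAlgebra B] [Nontrivial B] [PartialOrder B]
    [StarOrderedRing B] (g : B →L[ℂ] ℂ) (hg : ‖g‖ = 1) (h1 : g 1 = 1)
    {b : B} (hb : 0 ≤ b) : 0 ≤ g b := by
  have hbsa : IsSelfAdjoint b := .of_nonneg hb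
  have him : (g b).im = 0 := real_on_selfAdjoint g hg h1 hbsa
  set c : B := algebraMap ℝ B ‖b‖ - b with hc
  have hcsa : IsSelfAdjoint c := by
    apply IsSelfAdjoint.sub _ hbsa
    exact IsSelfAdjoint.algebraMap B (isSelfAdjoint_iff.mpr rfl)
  have hc0 : 0 ≤ c := by
    rw [hc, sub_nonneg]
    exact hbsa.le_algebraMap_norm_self
  have hcle : ‖c‖ ≤ ‖b‖ := by
    rw [CStarAlgebra.norm_le_iff_le_algebraMap c (norm_nonneg b) hc0, hc]
    simpa using hb
  have hgc : g c = (‖b‖ : ℂ) - g b := by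
    rw [hc, map_sub]
    congr 1
    rw [Algebra.algebraMap_eq_smul_one,
      show (‖b‖ • (1:B)) = ((‖b‖ : ℂ) • (1:B)) from (Complex.coe_smul ‖b‖ (1:B)).symm,
      map_smul, h1]
    simp
  have habs : ‖g c‖ ≤ ‖b‖ := by
    calc ‖g c‖ = ‖g c‖ := rfl
    _ ≤ ‖g‖ * ‖c‖ := g.le_opNorm c
    _ ≤ ‖b‖ := by rw [hg, one_mul]; exact hcle
  have hreabs : |‖b‖ - (g b).re| ≤ ‖b‖ := by
    have : ‖g c‖ = |‖b‖ - (g b).re| := by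
      rw [hgc]
      rw [show ((‖b‖ : ℂ) - g b) = (((‖b‖ - (g b).re : ℝ)) : ℂ) by
        apply Complex.ext <;> simp [him]]
      exact (Complex.norm_real _).trans (Real.norm_eq_abs _)
    rwa [this] at habs
  rw [Complex.le_def]
  constructor
  · simp only [Complex.zero_re]
    cases abs_le.mp hreabs; linarith
  · simp [him]

end Unital

/-- The inclusion of `A` into its unitization, as a continuous linear map. -/
def inrCLM (A : Type*) [NonUnitalCStarAlgebra A] : A →L[ℂ] A⁺¹ :=
  LinearMap.mkContinuous
    { toFun := fun a => (a : A⁺¹)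
      map_add' := fun x y => Unitization.inr_add ℂ x y
      map_smul' := fun c x => Unitization.inr_smul ℂ c x } 1
    (fun x => by simp [Unitization.norm_inr])

@[simp] lemma inrCLM_apply {A : Type*} [NonUnitalCStarAlgebra A] (a : A) :
    inrCLM A a = (a : A⁺¹) := rfl

/-- On a C⋆-algebra, every nonzero positive element admits a state attaining its norm. -/
lemma exists_state (a : A) (ha : 0 ≤ a) (ha0 : a ≠ 0) :
    ∃ ρ : A →L[ℂ] ℂ, IsState ρ ∧ ρ a = (‖a‖ : ℂ) := by
  set N : ℝ := ‖a‖ with hN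
  have hNpos : 0 < N := norm_pos_iff.mpr ha0
  set u : A⁺¹ := algebraMap ℝ A⁺¹ N + (a : A⁺¹) with hu
  have hainr : 0 ≤ (a : A⁺¹) := Unitization.inr_nonneg_iff.mpr ha
  have hmem : N + N ∈ spectrum ℝ u := by
    rw [hu]
    rw [spectrum.add_mem_add_iff]
    have := CStarAlgebra.norm_mem_spectrum_of_nonneg hainr
    rwa [Unitization.norm_inr] at this
  have hu_ge : 2 * N ≤ ‖u‖ := by
    have := spectrum.norm_le_norm_of_mem hmem
    rw [Real.norm_eq_abs, abs_of_nonneg (by linarith)] at this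
    linarith
  have hu_le : ‖u‖ ≤ 2 * N := by
    calc ‖u‖ ≤ ‖algebraMap ℝ A⁺¹ N‖ + ‖(a : A⁺¹)‖ := norm_add_le _ _
    _ = 2 * N := by
        rw [norm_algebraMap', Unitization.norm_inr, Real.norm_eq_abs, abs_of_nonneg hNpos.le]
        ring
  have hu_norm : ‖u‖ = 2 * N := le_antisymm hu_le hu_ge
  have hune : u ≠ 0 := by
    intro h
    rw [h, norm_zero] at hu_norm
    linarith
  obtain ⟨g, hg1, hgu⟩ := exists_dual_vector ℂ u (norm_ne_zero_iff.mpr hune)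
  have hgsplit : (N : ℂ) * g 1 + g (a : A⁺¹) = 2 * N := by
    have h1 : g u = (N : ℂ) * g 1 + g (a : A⁺¹) := by
      rw [hu, map_add]
      congr 1
      rw [Algebra.algebraMap_eq_smul_one,
        show (N • (1:A⁺¹)) = ((N : ℂ) • (1:A⁺¹)) from (Complex.coe_smul N (1:A⁺¹)).symm,
        map_smul, smul_eq_mul]
    rw [← h1, hgu, hu_norm]
    norm_cast
  have hz_le : ‖g 1‖ ≤ 1 := by
    calc ‖g 1‖ = ‖g 1‖ := rfl
    _ ≤ ‖g‖ * ‖(1:A⁺¹)‖ := g.le_opNorm 1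
    _ = 1 := by rw [hg1, norm_one, one_mul]
  have hw_le : ‖g (a : A⁺¹)‖ ≤ N := by
    calc ‖g (a : A⁺¹)‖ = ‖g (a : A⁺¹)‖ := rfl
    _ ≤ ‖g‖ * ‖(a : A⁺¹)‖ := g.le_opNorm _
    _ = N := by rw [hg1, Unitization.norm_inr, one_mul]
  have hg1val : g 1 = 1 := by
    set z := g 1 with hz
    have h2mz : ‖2 - z‖ ≤ 1 := by
      have hwz : g (a : A⁺¹) = (N : ℂ) * (2 - z) := by
        linear_combination hgsplit
      have := hw_le
      rw [hwz, norm_mul, Complex.norm_real, Real.norm_eq_abs, abs_of_nonneg hNpos.le] at this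
      calc ‖2 - z‖ = N * ‖2 - z‖ / N := by field_simp
      _ ≤ N / N := by gcongr
      _ = 1 := by field_simp
    have h1 : Complex.normSq z ≤ 1 := by
      have := hz_le
      rw [← Complex.sq_norm]
      nlinarith [norm_nonneg z]
    have h2 : Complex.normSq (2 - z) ≤ 1 := by
      rw [← Complex.sq_norm]
      nlinarith [norm_nonneg (2 - z)]
    rw [Complex.normSq_apply] at h1 h2
    simp only [Complex.sub_re, Complex.sub_im, Complex.re_ofNat, Complex.im_ofNat] at h2
    apply Complex.ext
    · simp only [Complex.one_re]
      nlinarith [sq_nonneg (z.re - 1), sq_nonneg z.im]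
    · simp only [Complex.one_im]
      nlinarith [sq_nonneg (z.re - 1), sq_nonneg z.im]
  have hwval : g (a : A⁺¹) = (N : ℂ) := by
    rw [hg1val, mul_one] at hgsplit
    linear_combination hgsplit
  set ρ : A →L[ℂ] ℂ := g.comp (inrCLM A) with hρ
  have hρa : ρ a = (N : ℂ) := by simp [hρ, hwval]
  have hρ_pos : ∀ b : A, 0 ≤ ρ (star b * b) := by
    intro b
    have hb : ((star b * b : A) : A⁺¹) = star (b : A⁺¹) * (b : A⁺¹) := by
      rw [Unitization.inr_mul, Unitization.inr_star]
    simp only [hρ, ContinuousLinearMap.comp_apply, inrCLM_apply, hb]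
    exact pos_of_norm_one_unital g hg1 hg1val (star_mul_self_nonneg _)
  have hρ_norm : ‖ρ‖ = 1 := by
    apply le_antisymm
    · apply ContinuousLinearMap.opNorm_le_bound _ zero_le_one
      intro b
      calc ‖ρ b‖ ≤ ‖g‖ * ‖(b : A⁺¹)‖ := g.le_opNorm _
      _ = 1 * ‖b‖ := by rw [hg1, Unitization.norm_inr]
    · have h1 : ‖ρ a‖ = N := by rw [hρa]; simp [abs_of_nonneg hNpos.le]
      have h2 : ‖ρ a‖ ≤ ‖ρ‖ * ‖a‖ := ρ.le_opNorm a
      rw [h1, ← hN] at h2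
      calc (1:ℝ) = N / N := by field_simp
      _ ≤ ‖ρ‖ * N / N := by gcongr
      _ = ‖ρ‖ := by field_simp
  exact ⟨ρ, ⟨hρ_norm, hρ_pos⟩, hρa⟩

/-! ### States composed with the inner product -/

local notation "⟪" x ", " y "⟫" => (inner _ x y : A)

lemma pos_of_isState {ρ : A →L[ℂ] ℂ} (hρ : IsState ρ) {a : A} (ha : 0 ≤ a) : 0 ≤ ρ a := by
  have h1 : star (CFC.sqrt a) * CFC.sqrt a = a := by
    rw [(IsSelfAdjoint.of_nonneg (CFC.sqrt_nonneg _)).star_eq, CFC.sqrt_mul_sqrt_self a ha]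
  calc (0:ℂ) ≤ ρ (star (CFC.sqrt a) * CFC.sqrt a) := hρ.2 _
  _ = ρ a := by rw [h1]

lemma abs_apply_le {ρ : A →L[ℂ] ℂ} (hρ : IsState ρ) (a : A) : ‖ρ a‖ ≤ ‖a‖ := by
  have := ρ.le_opNorm a
  rwa [hρ.1, one_mul] at this

variable {ρ : A →L[ℂ] ℂ}

lemma im_inner_self (hρ : IsState ρ) (x : H) : (ρ ⟪x, x⟫).im = 0 := by
  have h := pos_of_isState hρ (CStarModuleOld.inner_self_nonneg (x := x))
  rw [Complex.le_def] at h
  exact h.2.symm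

lemma re_inner_self_nonneg (hρ : IsState ρ) (x : H) : 0 ≤ (ρ ⟪x, x⟫).re := by
  have h := pos_of_isState hρ (CStarModuleOld.inner_self_nonneg (x := x))
  rw [Complex.le_def] at h
  simpa using h.1

lemma genexp (x y v w : H) (c : ℂ) :
    ρ ⟪x + c • y, v + c • w⟫ = ρ ⟪x, v⟫ + c * ρ ⟪x, w⟫ + (starRingEnd ℂ) c * ρ ⟪y, v⟫
      + (c * (starRingEnd ℂ) c) * ρ ⟪y, w⟫ := by
  simp only [CStarModuleOld.inner_add_left, CStarModuleOld.inner_add_right,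
    CStarModuleOld.inner_smul_left_complex, CStarModuleOld.inner_smul_right_complex, map_add, map_smul,
    smul_eq_mul, RCLike.star_def]
  ring

lemma conj_symm' (hρ : IsState ρ) (x y : H) :
    (starRingEnd ℂ) (ρ ⟪y, x⟫) = ρ ⟪x, y⟫ := by
  have e1 := genexp (ρ := ρ) x y x y 1
  have e2 := genexp (ρ := ρ) x y x y Complex.I
  have i1 := im_inner_self hρ (x + (1:ℂ) • y)
  have i2 := im_inner_self hρ (x + Complex.I • y)
  have ixx := im_inner_self hρ x
  have iyy := im_inner_self hρ y
  rw [e1] at i1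
  rw [e2] at i2
  simp only [map_one, one_mul, mul_one, Complex.conj_I, Complex.add_im, Complex.mul_im,
    Complex.I_re, Complex.I_im, Complex.neg_im, Complex.neg_re, Complex.mul_re] at i1 i2
  apply Complex.ext <;> simp only [Complex.conj_re, Complex.conj_im] <;> linarith

/-- The Cauchy–Schwarz inequality for a state composed with the inner product. -/
lemma cs (hρ : IsState ρ) (x y : H) :
    ‖ρ ⟪x, y⟫‖ ^ 2 ≤ (ρ ⟪x, x⟫).re * (ρ ⟪y, y⟫).re := by
  letI c : PreInnerProductSpace.Core ℂ H :=
    { inner := fun x y => ρ ⟪x, y⟫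
      conj_inner_symm := conj_symm' hρ
      re_inner_nonneg := fun x => by simpa using re_inner_self_nonneg hρ x
      add_left := fun x y z => by simp [CStarModuleOld.inner_add_left]
      smul_left := fun x y r => by simp [CStarModuleOld.inner_smul_left_complex] }
  have h := @InnerProductSpace.Core.inner_mul_inner_self_le ℂ H _ _ _ c x y
  have hxy : (c.inner x y : ℂ) = ρ ⟪x, y⟫ := rfl
  have hyx : ‖(c.inner y x : ℂ)‖ = ‖ρ ⟪x, y⟫‖ := by
    rw [show (c.inner y x : ℂ) = ρ ⟪y, x⟫ from rfl, ← conj_symm' hρ x y]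
    simp
  calc ‖ρ ⟪x, y⟫‖ ^ 2 = ‖(c.inner x y : ℂ)‖ * ‖(c.inner y x : ℂ)‖ := by
        rw [hyx, hxy, sq]
  _ ≤ _ := h

/-- The Cauchy–Schwarz inequality in the Hilbert C⋆-module. -/
lemma inner_norm_le_old (x y : H) : ‖⟪x, y⟫‖ ≤ ‖x‖ * ‖y‖ := by
  set a : A := ⟪x, y⟫ with ha
  rcases eq_or_ne a 0 with h0 | h0
  · rw [h0, norm_zero]; positivity
  have hb0 : star a * a ≠ 0 := by
    intro h; apply h0; exact (CStarRing.star_mul_self_eq_zero_iff a).mp h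
  obtain ⟨ρ, hρ, hρb⟩ := exists_state (star a * a) (star_mul_self_nonneg a) hb0
  set z : H := MulOpposite.op a • x with hz
  have hbz : star a * a = ⟪y, z⟫ := by
    rw [hz, CStarModuleOld.inner_op_smul_right, ha, CStarModuleOld.star_inner]
  have hzz : ⟪z, z⟫ = star a * ⟪x, x⟫ * a := by
    rw [hz, CStarModuleOld.inner_op_smul_right, ← CStarModuleOld.star_inner (A := A) x (x <• a),
      CStarModuleOld.inner_op_smul_right, star_mul, CStarModuleOld.star_inner x x]
  have hcs := cs hρ y z
  rw [← hbz, hρb] at hcs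
  have hyy : (ρ ⟪y, y⟫).re ≤ ‖y‖ ^ 2 :=
    le_trans (Complex.re_le_norm _) ((abs_apply_le hρ _).trans CStarModuleOld.norm_sq_eq.symm.le)
  have hzz' : (ρ ⟪z, z⟫).re ≤ ‖a‖ ^ 2 * ‖x‖ ^ 2 := by
    refine le_trans (Complex.re_le_norm _) ((abs_apply_le hρ _).trans ?_)
    rw [hzz]
    calc ‖star a * ⟪x, x⟫ * a‖ ≤ ‖star a * ⟪x, x⟫‖ * ‖a‖ := norm_mul_le _ _
      _ ≤ ‖star a‖ * ‖⟪x, x⟫‖ * ‖a‖ := by gcongr; exact norm_mul_le _ _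
      _ = ‖a‖ ^ 2 * ‖x‖ ^ 2 := by rw [norm_star, ← CStarModuleOld.norm_sq_eq]; ring
  have hb : ‖star a * a‖ = ‖a‖ ^ 2 := by rw [CStarRing.norm_star_mul_self, sq]
  have hzn0 : 0 ≤ (ρ ⟪z, z⟫).re := re_inner_self_nonneg hρ z
  rw [Complex.norm_real, Real.norm_eq_abs, abs_of_nonneg (norm_nonneg _), hb] at hcs
  have h4 : (‖a‖ ^ 2) ^ 2 ≤ (‖a‖ * (‖x‖ * ‖y‖)) ^ 2 := by
    calc _ ≤ _ := hcs
    _ ≤ ‖y‖ ^ 2 * (‖a‖ ^ 2 * ‖x‖ ^ 2) := mul_le_mul hyy hzz' hzn0 (by positivity)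
    _ = _ := by ring
  have ha0 : 0 < ‖a‖ := norm_pos_iff.mpr h0
  have h5 := (pow_le_pow_iff_left₀ (by positivity) (by positivity) two_ne_zero).mp h4
  rw [sq] at h5
  exact le_of_mul_le_mul_left h5 ha0

/-! ### The adjoint and the iteration argument -/

lemma adj_norm_le (T Tadj : H →L[ℂ] H)
    (hT : ∀ x y : H, ⟪T x, y⟫ = ⟪x, Tadj y⟫) : ‖Tadj‖ ≤ ‖T‖ := by
  refine ContinuousLinearMap.opNorm_le_bound _ (norm_nonneg T) fun y => ?_
  have h1 : ‖Tadj y‖ ^ 2 = ‖⟪Tadj y, Tadj y⟫‖ := CStarModuleOld.norm_sq_eq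
  have h2 : ⟪T (Tadj y), y⟫ = ⟪Tadj y, Tadj y⟫ := hT (Tadj y) y
  have h3 : ‖⟪T (Tadj y), y⟫‖ ≤ ‖T (Tadj y)‖ * ‖y‖ := inner_norm_le_old _ _
  have h4 : ‖T (Tadj y)‖ ≤ ‖T‖ * ‖Tadj y‖ := T.le_opNorm _
  have h5 : ‖Tadj y‖ ^ 2 ≤ ‖T‖ * ‖Tadj y‖ * ‖y‖ := by
    rw [h1, ← h2]
    calc ‖⟪T (Tadj y), y⟫‖ ≤ ‖T (Tadj y)‖ * ‖y‖ := h3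
    _ ≤ ‖T‖ * ‖Tadj y‖ * ‖y‖ := by
        have := norm_nonneg y; nlinarith [norm_nonneg (T (Tadj y))]
  rcases eq_or_lt_of_le (norm_nonneg (Tadj y)) with h | h
  · rw [← h]; positivity
  · nlinarith [norm_nonneg y, norm_nonneg (Tadj y)]

lemma pow_adj (S : H →L[ℂ] H) (hS : ∀ z w : H, ⟪S z, w⟫ = ⟪z, S w⟫) :
    ∀ (n : ℕ) (z w : H), ⟪(S ^ n) z, w⟫ = ⟪z, (S ^ n) w⟫ := by
  intro n
  induction n with
  | zero => simp
  | succ n ih =>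
    intro z w
    have h1 : (S ^ (n+1)) z = S ((S ^ n) z) := by
      rw [pow_succ']; exact ContinuousLinearMap.mul_apply S (S ^ n) z
    have h2 : (S ^ (n+1)) w = (S ^ n) (S w) := by
      rw [pow_succ]; exact ContinuousLinearMap.mul_apply (S ^ n) S w
    rw [h1, h2, hS, ih]

/-- The iteration argument: a state applied to `⟪x, S x⟫` for a "selfadjoint" `S` is dominated
by `‖S‖`, provided `ρ ⟪x, x⟫ = 1`. -/
lemma iter_le (hρ : IsState ρ) (S : H →L[ℂ] H)
    (hS : ∀ z w : H, ⟪S z, w⟫ = ⟪z, S w⟫) {x : H} (hx : ρ ⟪x, x⟫ = 1) :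
    ‖ρ ⟪x, S x⟫‖ ≤ ‖S‖ := by
  set q : ℕ → ℝ := fun n => ‖ρ ⟪x, (S ^ (2^n)) x⟫‖ with hq
  have hqnn : ∀ n, 0 ≤ q n := fun n => norm_nonneg _
  have hre : (ρ ⟪x, x⟫).re = 1 := by rw [hx]; simp
  have hstep : ∀ n, q n ^ 2 ≤ q (n + 1) := by
    intro n
    have hcs := cs hρ x ((S ^ (2^n)) x)
    have h2 : ⟪(S ^ (2^n)) x, (S ^ (2^n)) x⟫ = ⟪x, (S ^ (2^(n+1))) x⟫ := by
      rw [pow_adj S hS (2^n) x ((S ^ (2^n)) x), ← ContinuousLinearMap.mul_apply, ← pow_add]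
      rw [show 2^n + 2^n = 2^(n+1) by omega]
    rw [h2, hre, one_mul] at hcs
    calc q n ^ 2 ≤ (ρ ⟪x, (S ^ (2^(n+1))) x⟫).re := hcs
    _ ≤ q (n + 1) := Complex.re_le_norm _
  have hgrow : ∀ n, q 0 ^ (2^n) ≤ q n := by
    intro n
    induction n with
    | zero => simp
    | succ n ih =>
      calc q 0 ^ (2^(n+1)) = (q 0 ^ (2^n)) ^ 2 := by rw [← pow_mul, pow_succ]
      _ ≤ (q n) ^ 2 := by apply pow_le_pow_left₀ (pow_nonneg (hqnn 0) _) ih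
      _ ≤ q (n + 1) := hstep n
  have hbound : ∀ n, q n ≤ ‖x‖^2 * ‖S‖^(2^n) := by
    intro n
    calc q n ≤ ‖⟪x, (S ^ (2^n)) x⟫‖ := abs_apply_le hρ _
    _ ≤ ‖x‖ * ‖(S ^ (2^n)) x‖ := inner_norm_le_old _ _
    _ ≤ ‖x‖ * (‖S ^ (2^n)‖ * ‖x‖) := by
        gcongr; exact (S ^ (2^n)).le_opNorm x
    _ ≤ ‖x‖ * (‖S‖^(2^n) * ‖x‖) := by
        have := norm_pow_le' S (pow_pos two_pos n)
        gcongr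
    _ = ‖x‖^2 * ‖S‖^(2^n) := by ring
  have hxge : (1:ℝ) ≤ ‖x‖^2 := by
    have h1 : ‖ρ ⟪x, x⟫‖ = 1 := by rw [hx]; simp
    have h2 := abs_apply_le hρ (⟪x, x⟫ : A)
    rw [h1] at h2
    calc (1:ℝ) ≤ ‖⟪x, x⟫‖ := h2
    _ = ‖x‖^2 := CStarModuleOld.norm_sq_eq.symm
  have hxpos : (0:ℝ) < ‖x‖^2 := lt_of_lt_of_le one_pos hxge
  have key : ∀ n, q 0 ≤ (‖x‖^2) ^ ((1:ℝ)/(2^n)) * ‖S‖ := by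
    intro n
    have hm : ((2:ℝ)^n) ≠ 0 := by positivity
    have h1 : q 0 ^ (2^n : ℕ) ≤ ‖x‖^2 * ‖S‖^(2^n : ℕ) := le_trans (hgrow n) (hbound n)
    have h2 : q 0 = ((q 0 ^ (2^n : ℕ) : ℝ)) ^ ((1:ℝ)/(2^n)) := by
      rw [← Real.rpow_natCast (q 0) (2^n), ← Real.rpow_mul (hqnn 0)]
      push_cast
      rw [mul_one_div_cancel hm, Real.rpow_one]
    rw [h2]
    calc ((q 0 ^ (2^n : ℕ) : ℝ)) ^ ((1:ℝ)/(2^n))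
        ≤ (‖x‖^2 * ‖S‖^(2^n : ℕ)) ^ ((1:ℝ)/(2^n)) := by
          apply Real.rpow_le_rpow (by positivity) h1 (by positivity)
    _ = (‖x‖^2) ^ ((1:ℝ)/(2^n)) * (‖S‖^(2^n : ℕ)) ^ ((1:ℝ)/(2^n)) := by
          apply Real.mul_rpow (by positivity) (by positivity)
    _ = (‖x‖^2) ^ ((1:ℝ)/(2^n)) * ‖S‖ := by
          congr 1
          rw [← Real.rpow_natCast ‖S‖ (2^n), ← Real.rpow_mul (norm_nonneg S)]
          push_cast
          rw [mul_one_div_cancel hm, Real.rpow_one]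
  have hlim : Filter.Tendsto (fun n : ℕ => (‖x‖^2) ^ ((1:ℝ)/(2^n)) * ‖S‖)
      Filter.atTop (nhds (1 * ‖S‖)) := by
    apply Filter.Tendsto.mul_const
    have h0 : Filter.Tendsto (fun n : ℕ => (1:ℝ)/(2^n)) Filter.atTop (nhds 0) := by
      simpa [one_div, inv_pow] using
        tendsto_pow_atTop_nhds_zero_of_lt_one (by norm_num : (0:ℝ) ≤ 2⁻¹) (by norm_num)
    have hc : ContinuousAt (fun t : ℝ => (‖x‖^2) ^ t) 0 :=
      Real.continuousAt_const_rpow (ne_of_gt hxpos)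
    simpa [Real.rpow_zero, Function.comp_def] using hc.tendsto.comp h0
  have hfin : q 0 ≤ 1 * ‖S‖ := le_of_tendsto_of_tendsto' tendsto_const_nhds hlim key
  have hq0 : q 0 = ‖ρ ⟪x, S x⟫‖ := by simp [hq]
  rw [← hq0]
  linarith

/-! ### Bounds on the spatial numerical radius -/

lemma elem_le (T Tadj : H →L[ℂ] H) (hT : ∀ x y : H, ⟪T x, y⟫ = ⟪x, Tadj y⟫)
    (hρ : IsState ρ) {x : H} (hx : ρ ⟪x, x⟫ = 1) :
    ‖ρ ⟪x, T x⟫‖ ≤ ‖T‖ := by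
  set S := Tadj.comp T with hSdef
  have hS : ∀ z w : H, ⟪S z, w⟫ = ⟪z, S w⟫ := by
    intro z w
    have h1 : ⟪S z, w⟫ = ⟪Tadj (T z), w⟫ := rfl
    have h2 : ⟪Tadj (T z), w⟫ = star ⟪w, Tadj (T z)⟫ := (CStarModuleOld.star_inner w _).symm
    rw [h1, h2, ← hT w (T z), CStarModuleOld.star_inner, hT z (T w)]
    rfl
  have hiter := iter_le hρ S hS hx
  have hSx : ⟪T x, T x⟫ = ⟪x, S x⟫ := hT x (T x)
  have hcs := cs hρ x (T x)
  have hre : (ρ ⟪x, x⟫).re = 1 := by rw [hx]; simp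
  rw [hre, one_mul, hSx] at hcs
  have h3 : (ρ ⟪x, S x⟫).re ≤ ‖S‖ := le_trans (Complex.re_le_norm _) hiter
  have h4 : ‖S‖ ≤ ‖Tadj‖ * ‖T‖ := ContinuousLinearMap.opNorm_comp_le _ _
  have h5 : ‖Tadj‖ ≤ ‖T‖ := adj_norm_le T Tadj hT
  have h6 : ‖ρ ⟪x, T x⟫‖^2 ≤ ‖T‖ * ‖T‖ := by
    nlinarith [norm_nonneg T, norm_nonneg Tadj]
  nlinarith [norm_nonneg (ρ ⟪x, T x⟫), norm_nonneg T]

lemma snr_nonneg (T : H →L[ℂ] H) : 0 ≤ spatialNumRadius A T := by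
  apply Real.sSup_nonneg
  rintro r ⟨x, ρ', _, _, rfl⟩
  exact norm_nonneg _

lemma snr_le_norm (T Tadj : H →L[ℂ] H) (hT : ∀ x y : H, ⟪T x, y⟫ = ⟪x, Tadj y⟫) :
    spatialNumRadius A T ≤ ‖T‖ := by
  apply Real.sSup_le _ (norm_nonneg T)
  rintro r ⟨x, ρ', hρ', hx, rfl⟩
  exact elem_le T Tadj hT hρ' hx

lemma snr_bddAbove (T Tadj : H →L[ℂ] H) (hT : ∀ x y : H, ⟪T x, y⟫ = ⟪x, Tadj y⟫) :
    BddAbove {r : ℝ | ∃ (x : H) (ρ : A →L[ℂ] ℂ), IsState ρ ∧ ρ ⟪x, x⟫ = 1 ∧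
      r = ‖ρ ⟪x, T x⟫‖} := by
  refine ⟨‖T‖, ?_⟩
  rintro r ⟨x, ρ', hρ', hx, rfl⟩
  exact elem_le T Tadj hT hρ' hx

lemma scaled (T Tadj : H →L[ℂ] H) (hT : ∀ x y : H, ⟪T x, y⟫ = ⟪x, Tadj y⟫)
    (hρ : IsState ρ) (u : H) :
    ‖ρ ⟪u, T u⟫‖ ≤ spatialNumRadius A T * (ρ ⟪u, u⟫).re := by
  set c := (ρ ⟪u, u⟫).re with hc
  have hc0 : 0 ≤ c := re_inner_self_nonneg hρ u
  have him : (ρ ⟪u, u⟫).im = 0 := im_inner_self hρ u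
  have hval : ρ ⟪u, u⟫ = (c : ℂ) := by
    apply Complex.ext <;> simp [him, hc]
  rcases eq_or_lt_of_le hc0 with h0 | hpos
  · have hcs := cs hρ u (T u)
    rw [← hc, ← h0, zero_mul] at hcs
    have : ‖ρ ⟪u, T u⟫‖ = 0 := by
      nlinarith [norm_nonneg (ρ ⟪u, T u⟫)]
    rw [this, ← h0, mul_zero]
  · set s : ℝ := (Real.sqrt c)⁻¹ with hs
    have hsqrt : Real.sqrt c > 0 := Real.sqrt_pos.mpr hpos
    have hs2 : s^2 * c = 1 := by
      rw [hs]
      field_simp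
      rw [Real.sq_sqrt hc0]
    set u' : H := ((s:ℝ):ℂ) • u with hu'
    have hstarS : star ((s:ℝ):ℂ) = ((s:ℝ):ℂ) := Complex.conj_ofReal s
    have hinner : (⟪u', u'⟫ : A) = (((s:ℝ):ℂ) * ((s:ℝ):ℂ)) • (⟪u, u⟫ : A) := by
      rw [hu']
      simp only [CStarModuleOld.inner_smul_left_complex, CStarModuleOld.inner_smul_right_complex,
        smul_smul, RCLike.star_def, Complex.conj_ofReal]
    have hcast : (((s:ℝ):ℂ) * ((s:ℝ):ℂ)) * (c:ℂ) = ((s^2 * c : ℝ) : ℂ) := by push_cast; ring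
    have h1 : ρ ⟪u', u'⟫ = 1 := by
      rw [hinner, map_smul, hval, smul_eq_mul, hcast, hs2, Complex.ofReal_one]
    have hTu' : T u' = ((s:ℝ):ℂ) • T u := map_smul T _ _
    have hinner2 : ρ ⟪u', T u'⟫ = ((s^2 : ℝ) : ℂ) * ρ ⟪u, T u⟫ := by
      rw [hu', hTu']
      simp only [CStarModuleOld.inner_smul_left_complex, CStarModuleOld.inner_smul_right_complex,
        smul_smul, RCLike.star_def, Complex.conj_ofReal, map_smul, smul_eq_mul]
      push_cast
      ring
    have habs : ‖ρ ⟪u', T u'⟫‖ = s^2 * ‖ρ ⟪u, T u⟫‖ := by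
      rw [hinner2, norm_mul, Complex.norm_real, Real.norm_eq_abs, abs_of_pos (by positivity)]
    have hmem : ‖ρ ⟪u', T u'⟫‖ ∈ {r : ℝ | ∃ (x : H) (ρ : A →L[ℂ] ℂ),
        IsState ρ ∧ ρ ⟪x, x⟫ = 1 ∧ r = ‖ρ ⟪x, T x⟫‖} :=
      ⟨u', ρ, hρ, h1, rfl⟩
    have hle : ‖ρ ⟪u', T u'⟫‖ ≤ spatialNumRadius A T :=
      le_csSup (snr_bddAbove T Tadj hT) hmem
    rw [habs] at hle
    have hfin := mul_le_mul_of_nonneg_left hle hpos.le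
    nlinarith [norm_nonneg (ρ ⟪u, T u⟫)]

lemma polar (T Tadj : H →L[ℂ] H) (hT : ∀ x y : H, ⟪T x, y⟫ = ⟪x, Tadj y⟫)
    (hρ : IsState ρ) (x y : H) :
    ‖ρ ⟪y, T x⟫‖ ≤ spatialNumRadius A T * (‖x‖^2 + ‖y‖^2) := by
  have hw0 : 0 ≤ spatialNumRadius A T := snr_nonneg T
  have hTexp : ∀ c : ℂ, T (x + c • y) = T x + c • T y := by
    intro c; rw [map_add, map_smul]
  have hF : ∀ c : ℂ, ρ ⟪x + c • y, T (x + c • y)⟫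
      = ρ ⟪x, T x⟫ + c * ρ ⟪x, T y⟫ + (starRingEnd ℂ) c * ρ ⟪y, T x⟫
        + (c * (starRingEnd ℂ) c) * ρ ⟪y, T y⟫ := by
    intro c; rw [hTexp c]; exact genexp x y (T x) (T y) c
  have hid : ρ ⟪y, T x⟫ = (4:ℂ)⁻¹ *
      (ρ ⟪x + (1:ℂ) • y, T (x + (1:ℂ) • y)⟫
        + Complex.I * ρ ⟪x + Complex.I • y, T (x + Complex.I • y)⟫
        - ρ ⟪x + (-1:ℂ) • y, T (x + (-1:ℂ) • y)⟫
        - Complex.I * ρ ⟪x + (-Complex.I) • y, T (x + (-Complex.I) • y)⟫) := by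
    rw [hF 1, hF Complex.I, hF (-1), hF (-Complex.I)]
    simp only [map_one, map_neg, Complex.conj_I, one_mul, mul_one, neg_neg, mul_neg, neg_mul]
    ring_nf
    rw [Complex.I_sq]
    ring
  have htri : ‖ρ ⟪y, T x⟫‖ ≤ (4:ℝ)⁻¹ *
      (‖ρ ⟪x + (1:ℂ) • y, T (x + (1:ℂ) • y)⟫‖
        + ‖ρ ⟪x + Complex.I • y, T (x + Complex.I • y)⟫‖
        + ‖ρ ⟪x + (-1:ℂ) • y, T (x + (-1:ℂ) • y)⟫‖
        + ‖ρ ⟪x + (-Complex.I) • y, T (x + (-Complex.I) • y)⟫‖) := by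
    set F1 := ρ ⟪x + (1:ℂ) • y, T (x + (1:ℂ) • y)⟫
    set F2 := ρ ⟪x + Complex.I • y, T (x + Complex.I • y)⟫
    set F3 := ρ ⟪x + (-1:ℂ) • y, T (x + (-1:ℂ) • y)⟫
    set F4 := ρ ⟪x + (-Complex.I) • y, T (x + (-Complex.I) • y)⟫
    rw [hid]
    have h4 : ‖F1 + Complex.I * F2 - F3 - Complex.I * F4‖ ≤ ‖F1‖ + ‖F2‖ + ‖F3‖ + ‖F4‖ := by
      calc ‖F1 + Complex.I * F2 - F3 - Complex.I * F4‖
          ≤ ‖F1 + Complex.I * F2 - F3‖ + ‖Complex.I * F4‖ := norm_sub_le _ _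
      _ ≤ (‖F1 + Complex.I * F2‖ + ‖F3‖) + ‖Complex.I * F4‖ := by
          gcongr; exact norm_sub_le _ _
      _ ≤ ((‖F1‖ + ‖Complex.I * F2‖) + ‖F3‖) + ‖Complex.I * F4‖ := by
          gcongr; exact norm_add_le _ _
      _ = ‖F1‖ + ‖F2‖ + ‖F3‖ + ‖F4‖ := by
          simp [norm_mul]
    calc ‖(4:ℂ)⁻¹ * (F1 + Complex.I * F2 - F3 - Complex.I * F4)‖
        = (4:ℝ)⁻¹ * ‖F1 + Complex.I * F2 - F3 - Complex.I * F4‖ := by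
          rw [norm_mul, norm_inv]
          norm_num
    _ ≤ (4:ℝ)⁻¹ * (‖F1‖ + ‖F2‖ + ‖F3‖ + ‖F4‖) := by gcongr
    _ = _ := rfl
  have hs1 := scaled T Tadj hT hρ (x + (1:ℂ) • y)
  have hs2 := scaled T Tadj hT hρ (x + Complex.I • y)
  have hs3 := scaled T Tadj hT hρ (x + (-1:ℂ) • y)
  have hs4 := scaled T Tadj hT hρ (x + (-Complex.I) • y)
  have hsum : ρ ⟪x + (1:ℂ) • y, x + (1:ℂ) • y⟫ + ρ ⟪x + Complex.I • y, x + Complex.I • y⟫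
      + ρ ⟪x + (-1:ℂ) • y, x + (-1:ℂ) • y⟫ + ρ ⟪x + (-Complex.I) • y, x + (-Complex.I) • y⟫
      = 4 * ρ ⟪x, x⟫ + 4 * ρ ⟪y, y⟫ := by
    rw [genexp x y x y 1, genexp x y x y Complex.I, genexp x y x y (-1),
      genexp x y x y (-Complex.I)]
    simp only [map_one, map_neg, Complex.conj_I, one_mul, mul_one, neg_neg, mul_neg, neg_mul]
    ring_nf
    rw [Complex.I_sq]
    ring
  have hsum_re : (ρ ⟪x + (1:ℂ) • y, x + (1:ℂ) • y⟫).re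
      + (ρ ⟪x + Complex.I • y, x + Complex.I • y⟫).re
      + (ρ ⟪x + (-1:ℂ) • y, x + (-1:ℂ) • y⟫).re
      + (ρ ⟪x + (-Complex.I) • y, x + (-Complex.I) • y⟫).re
      = 4 * (ρ ⟪x, x⟫).re + 4 * (ρ ⟪y, y⟫).re := by
    have := congrArg Complex.re hsum
    simpa only [Complex.add_re, Complex.mul_re, Complex.re_ofNat, Complex.im_ofNat,
      zero_mul, sub_zero] using this
  have hrxx : (ρ ⟪x, x⟫).re ≤ ‖x‖^2 := by
    calc (ρ ⟪x, x⟫).re ≤ ‖ρ ⟪x, x⟫‖ := Complex.re_le_norm _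
    _ ≤ ‖(⟪x, x⟫ : A)‖ := abs_apply_le hρ _
    _ = ‖x‖^2 := CStarModuleOld.norm_sq_eq.symm
  have hryy : (ρ ⟪y, y⟫).re ≤ ‖y‖^2 := by
    calc (ρ ⟪y, y⟫).re ≤ ‖ρ ⟪y, y⟫‖ := Complex.re_le_norm _
    _ ≤ ‖(⟪y, y⟫ : A)‖ := abs_apply_le hρ _
    _ = ‖y‖^2 := CStarModuleOld.norm_sq_eq.symm
  calc ‖ρ ⟪y, T x⟫‖ ≤ (4:ℝ)⁻¹ *
      (‖ρ ⟪x + (1:ℂ) • y, T (x + (1:ℂ) • y)⟫‖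
        + ‖ρ ⟪x + Complex.I • y, T (x + Complex.I • y)⟫‖
        + ‖ρ ⟪x + (-1:ℂ) • y, T (x + (-1:ℂ) • y)⟫‖
        + ‖ρ ⟪x + (-Complex.I) • y, T (x + (-Complex.I) • y)⟫‖) := htri
  _ ≤ (4:ℝ)⁻¹ * (spatialNumRadius A T * (ρ ⟪x + (1:ℂ) • y, x + (1:ℂ) • y⟫).re
        + spatialNumRadius A T * (ρ ⟪x + Complex.I • y, x + Complex.I • y⟫).re
        + spatialNumRadius A T * (ρ ⟪x + (-1:ℂ) • y, x + (-1:ℂ) • y⟫).re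
        + spatialNumRadius A T * (ρ ⟪x + (-Complex.I) • y, x + (-Complex.I) • y⟫).re) := by
      have : (0:ℝ) ≤ (4:ℝ)⁻¹ := by norm_num
      nlinarith [hs1, hs2, hs3, hs4]
  _ = spatialNumRadius A T * ((4:ℝ)⁻¹ *
        ((ρ ⟪x + (1:ℂ) • y, x + (1:ℂ) • y⟫).re
        + (ρ ⟪x + Complex.I • y, x + Complex.I • y⟫).re
        + (ρ ⟪x + (-1:ℂ) • y, x + (-1:ℂ) • y⟫).re
        + (ρ ⟪x + (-Complex.I) • y, x + (-Complex.I) • y⟫).re)) := by ring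
  _ = spatialNumRadius A T * ((ρ ⟪x, x⟫).re + (ρ ⟪y, y⟫).re) := by
      rw [hsum_re]; ring
  _ ≤ spatialNumRadius A T * (‖x‖^2 + ‖y‖^2) := by
      apply mul_le_mul_of_nonneg_left (add_le_add hrxx hryy) hw0

end SNRAux

end SNRAuxSection

/-- `(1/2)‖T‖ ≤ w̃(T) ≤ ‖T‖`. -/
theorem half_norm_le_spatialNumRadius_le_norm (T Tadj : H →L[ℂ] H) (hT : ∀ x y : H, (inner A (T x) y : A) = inner A x (Tadj y)) :
    (1 / 2 : ℝ) * ‖T‖ ≤ spatialNumRadius A T ∧ spatialNumRadius A T ≤ ‖T‖ := by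
  constructor
  · have hw0 : 0 ≤ spatialNumRadius A T := SNRAux.snr_nonneg T
    suffices h : ‖T‖ ≤ 2 * spatialNumRadius A T by linarith
    apply ContinuousLinearMap.opNorm_le_bound T (by linarith)
    intro x
    by_cases hTx : T x = 0
    · rw [hTx, norm_zero]
      positivity
    · have hx0 : (0:ℝ) < ‖x‖ := by
        rw [norm_pos_iff]
        intro h
        exact hTx (by rw [h, map_zero])
      have hTx0 : (0:ℝ) < ‖T x‖ := norm_pos_iff.mpr hTx
      have hinne : (inner A (T x) (T x) : A) ≠ 0 := by
        rw [ne_eq, CStarModuleOld.inner_self]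
        exact hTx
      obtain ⟨ρ, hρ, hρval⟩ := SNRAux.exists_state (inner A (T x) (T x) : A)
        CStarModuleOld.inner_self_nonneg hinne
      set s : ℝ := ‖x‖ / ‖T x‖ with hs
      have hspos : 0 < s := by positivity
      have hpol := SNRAux.polar T Tadj hT hρ x (((s:ℝ):ℂ) • T x)
      have hnormy : ‖(((s:ℝ):ℂ) • T x)‖ = ‖x‖ := by
        rw [norm_smul, Complex.norm_real, Real.norm_eq_abs, abs_of_pos hspos, hs]
        field_simp
      have hinsq : ‖(inner A (T x) (T x) : A)‖ = ‖T x‖^2 := CStarModuleOld.norm_sq_eq.symm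
      have hlhs : (ρ (inner A (((s:ℝ):ℂ) • T x) (T x) : A)) = ((s * ‖T x‖^2 : ℝ) : ℂ) := by
        rw [show (inner A (((s:ℝ):ℂ) • T x) (T x) : A)
            = ((s:ℝ):ℂ) • (inner A (T x) (T x) : A) by
          rw [CStarModuleOld.inner_smul_left_complex, RCLike.star_def, Complex.conj_ofReal]]
        rw [map_smul, hρval, hinsq, smul_eq_mul]
        push_cast
        ring
      have habs : ‖ρ (inner A (((s:ℝ):ℂ) • T x) (T x) : A)‖ = s * ‖T x‖^2 := by
        rw [hlhs, Complex.norm_real, Real.norm_eq_abs, abs_of_pos (by positivity)]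
      rw [habs, hnormy] at hpol
      have hkey : s * ‖T x‖^2 = ‖x‖ * ‖T x‖ := by
        rw [hs]
        field_simp
      rw [hkey] at hpol
      -- ‖x‖ * ‖T x‖ ≤ w * (‖x‖^2 + ‖x‖^2)
      nlinarith [hpol, hx0]
  · exact SNRAux.snr_le_norm T Tadj hT
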